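/- Let A ∈ SL(2,ℤ) with |trace(A)| > 2 and let B₁ = [[1, 0], [0, −1]] and B₂ = A⁻¹B₁A. Then the set of matrices M ∈ GL(2,ℤ) that commute with both B₁ and B₂ is exactly {I, −I}, where I is the 2×2 identity matrix. -/

import Mathlib

/-!
Commuting with `B₁ = diag(1, -1)` forces `M = diag(a, d)`. A diagonal matrix with `a ≠ d`
commutes only with diagonal matrices, but the off-diagonal entries of `B₂ = A⁻¹ B₁ A` are
`2 q s` and `-2 r p` for `A = [[p, q], [r, s]]`, and both vanish only when `A` is diagonal or
antidiagonal, i.e. `|tr A| = 2` or `tr A = 0`. Hence `a = d`, and `det M = a²` being a unit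
gives `a = ±1`.
-/

namespace Matrix

theorem fin_two_diag_mul_comm_iff {R : Type*} [CommRing R] (a d : R)
    (X : Matrix (Fin 2) (Fin 2) R) :
    !![a, 0; 0, d] * X = X * !![a, 0; 0, d] ↔ (a - d) * X 0 1 = 0 ∧ (a - d) * X 1 0 = 0 := by
  rw [← Matrix.ext_iff]
  simp only [mul_apply, of_apply, cons_val', cons_val_fin_one, Fin.sum_univ_two, Fin.isValue,
    cons_val_zero, cons_val_one, Fin.forall_fin_two, mul_zero, add_zero, zero_add, zero_mul]
  constructor
  · rintro ⟨⟨-, h01⟩, h10, -⟩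
    exact ⟨by linear_combination h01, by linear_combination -h10⟩
  · rintro ⟨h01, h10⟩
    exact ⟨⟨mul_comm _ _, by linear_combination h01⟩, by linear_combination -h10, mul_comm _ _⟩

theorem adjugate_mul_diag_one_neg_one_mul_apply_zero_one {R : Type*} [CommRing R]
    (A : Matrix (Fin 2) (Fin 2) R) :
    (adjugate A * !![(1 : R), 0; 0, -1] * A) 0 1 = 2 * A 0 1 * A 1 1 := by
  simp [adjugate_fin_two, Matrix.mul_apply]
  ring

theorem adjugate_mul_diag_one_neg_one_mul_apply_one_zero {R : Type*} [CommRing R]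
    (A : Matrix (Fin 2) (Fin 2) R) :
    (adjugate A * !![(1 : R), 0; 0, -1] * A) 1 0 = -(2 * A 1 0 * A 0 0) := by
  simp [adjugate_fin_two, Matrix.mul_apply]
  ring

theorem SpecialLinearGroup.abs_trace_le_two_of_mul_eq_zero (A : SpecialLinearGroup (Fin 2) ℤ)
    (hqs : A 0 1 * A 1 1 = 0) (hpr : A 1 0 * A 0 0 = 0) :
    |trace (A : Matrix (Fin 2) (Fin 2) ℤ)| ≤ 2 := by
  have hdet := A.2
  rw [det_fin_two] at hdet
  rw [trace_fin_two]
  rcases mul_eq_zero.mp hqs with hq | hs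
  · rw [hq, zero_mul, sub_zero] at hdet
    rcases Int.eq_one_or_neg_one_of_mul_eq_one' hdet with ⟨hp, hs⟩ | ⟨hp, hs⟩ <;> simp [hp, hs]
  · have hp : A 0 0 = 0 := by
      rcases mul_eq_zero.mp hpr with hr | hp
      · rw [hr, hs] at hdet; simp at hdet
      · exact hp
    simp [hp, hs]

end Matrix

theorem centralizer_B1_B2 (A : Matrix.SpecialLinearGroup (Fin 2) ℤ)
    (hA : 2 < |Matrix.trace (A : Matrix (Fin 2) (Fin 2) ℤ)|)
    (M : Matrix (Fin 2) (Fin 2) ℤ) (hM : IsUnit M.det) :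
    (M * !![1, 0; 0, -1] = !![1, 0; 0, -1] * M ∧
      M * ((↑(A⁻¹) : Matrix (Fin 2) (Fin 2) ℤ) * !![1, 0; 0, -1] * (↑A : Matrix (Fin 2) (Fin 2) ℤ)) =
        ((↑(A⁻¹) : Matrix (Fin 2) (Fin 2) ℤ) * !![1, 0; 0, -1] * (↑A : Matrix (Fin 2) (Fin 2) ℤ)) * M) ↔
      M = 1 ∨ M = -1 := by
  refine ⟨fun ⟨h₁, h₂⟩ => ?_, by rintro (rfl | rfl) <;> simp⟩
  obtain ⟨a, d, rfl⟩ : ∃ a d, M = !![a, 0; 0, d] := by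
    have := (Matrix.fin_two_diag_mul_comm_iff 1 (-1) M).1 h₁.symm
    exact ⟨M 0 0, M 1 1, by rw [Matrix.eta_fin_two M]; congr <;> omega⟩
  rw [Matrix.SpecialLinearGroup.coe_inv, Matrix.fin_two_diag_mul_comm_iff,
    Matrix.adjugate_mul_diag_one_neg_one_mul_apply_zero_one,
    Matrix.adjugate_mul_diag_one_neg_one_mul_apply_one_zero] at h₂
  obtain rfl : a = d := by
    by_contra hne
    refine (A.abs_trace_le_two_of_mul_eq_zero ?_ ?_).not_gt hA
    · simpa [sub_eq_zero, hne, mul_assoc] using h₂.1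
    · simpa [sub_eq_zero, hne, mul_assoc] using h₂.2
  rw [Matrix.det_fin_two_of, mul_zero, sub_zero, isUnit_mul_self_iff, Int.isUnit_iff] at hM
  rcases hM with rfl | rfl
  · exact Or.inl Matrix.one_fin_two.symm
  · exact Or.inr (by rw [Matrix.one_fin_two]; simp)
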